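/- arXiv:1601.01223 — 4 statements merged into one kernel-verified Lean document; each statement's English description precedes it below -/
import Mathlib

section
/- Let A : V → V be an invertible k-linear operator on a normed K-vector space V, and suppose ||·|| is a norm such that ||A||·||A⁻¹|| = 1. Then ||A|| equals the infimum norm ||A||_inf = inf{||A||' : ||·||' a norm on V}. -/
/-!
If `‖A‖ · ‖A⁻¹‖ = 1`, then `‖A v‖ = ‖A‖ · ‖v‖` for every `v`, hence `‖Aⁿ v‖ = ‖A‖ⁿ · ‖v‖`.
All norms on the finite-dimensional space `V` over the complete field `k((z))` are equivalent,
so for any other norm `‖·‖'` there is a constant `C` with `‖A‖ⁿ ≤ C · (‖A‖')ⁿ` for all `n`,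
which forces `‖A‖ ≤ ‖A‖'`. Thus `‖A‖` is the least operator norm of `A`.
-/

open scoped Classical
noncomputable section

def lval {k : Type*} [Field k] (ε : ℝ) (f : LaurentSeries k) : ℝ :=
  if f = 0 then 0 else ε ^ (HahnSeries.order f)

structure NANorm (k : Type*) [Field k] (ε : ℝ) (V : Type*) [AddCommGroup V]
    [Module (LaurentSeries k) V] where
  N : V → ℝ
  pos : ∀ v : V, v ≠ 0 → 0 < N v
  map_zero' : N 0 = 0
  ultra : ∀ v w : V, N (v + w) ≤ max (N v) (N w)
  smul' : ∀ (f : LaurentSeries k) (v : V), N (f • v) = lval ε f * N v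

/-- The operator norm `‖A‖ = sup_{v ≠ 0} ‖A v‖ / ‖v‖` of a map `A : V → V`
with respect to a non-archimedean norm on `V`. -/
def opNorm {k : Type*} [Field k] {ε : ℝ} {V : Type*} [AddCommGroup V]
    [Module (LaurentSeries k) V] (nn : NANorm k ε V) (A : V → V) : ℝ :=
  sSup {r : ℝ | ∃ v : V, v ≠ 0 ∧ r = nn.N (A v) / nn.N v}

/-- The infimum norm of an operator: the infimum over all non-archimedean norms
on `V` of the corresponding operator norm. -/
def infNorm {k : Type*} [Field k] (ε : ℝ) {V : Type*} [AddCommGroup V]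
    [Module (LaurentSeries k) V] (A : V → V) : ℝ :=
  sInf {r : ℝ | ∃ nn : NANorm k ε V, r = opNorm nn A}


open scoped NNReal WithZero

section LaurentSeriesNorm

variable {K : Type*} [Field K]

theorem LaurentSeries.valuation_eq_exp_neg_order {f : LaurentSeries K} (hf : f ≠ 0) :
    Valued.v f = WithZero.exp (-f.order) := by
  have hv : Valued.v f ≠ 0 := (Valuation.ne_zero_iff _).mpr hf
  have hle : Valued.v f ≤ WithZero.exp (-f.order) :=
    (valuation_le_iff_coeff_lt_eq_zero K).mpr fun _ hn => HahnSeries.coeff_eq_zero_of_lt_order hn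
  have hge : -WithZero.log (Valued.v f) ≤ f.order := by
    by_contra! hlt
    exact hf <| HahnSeries.coeff_order_eq_zero.mp <|
      (valuation_le_iff_coeff_lt_log_eq_zero K hv).mp le_rfl _ hlt
  have hle' := (WithZero.log_le_iff_le_exp hv).mpr hle
  rw [← WithZero.exp_log hv, show WithZero.log (Valued.v f) = -f.order by omega]

variable (K) in
/-- The rank-one structure on the `X`-adic valuation for which `‖X‖ = e⁻¹`. -/
@[reducible]
def LaurentSeries.rankOne {e : ℝ≥0} (he : 1 < e) :
    (Valued.v : Valuation (LaurentSeries K) ℤᵐ⁰).RankOne where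
  hom' := (WithZeroMulInt.toNNReal (zero_lt_one.trans he).ne').comp
    MonoidWithZeroHom.ValueGroup₀.embedding
  strictMono' := (WithZeroMulInt.toNNReal_strictMono he).comp
    MonoidWithZeroHom.ValueGroup₀.embedding_strictMono
  exists_val_nontrivial := ⟨HahnSeries.single 1 1, by simp [valuation_single_zpow]⟩

theorem Real.one_lt_toNNReal_inv {ε : ℝ} (hε0 : 0 < ε) (hε1 : ε < 1) :
    1 < Real.toNNReal ε⁻¹ :=
  Real.one_lt_toNNReal.mpr ((one_lt_inv₀ hε0).mpr hε1)

variable (K) in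
@[reducible]
def LaurentSeries.normedField {ε : ℝ} (hε0 : 0 < ε) (hε1 : ε < 1) :
    NontriviallyNormedField (LaurentSeries K) :=
  @Valued.toNontriviallyNormedField _ _ ℤᵐ⁰ _ _
    (LaurentSeries.rankOne K (Real.one_lt_toNNReal_inv hε0 hε1))

theorem LaurentSeries.norm_eq_lval {ε : ℝ} (hε0 : 0 < ε) (hε1 : ε < 1) (f : LaurentSeries K) :
    @Norm.norm _ (LaurentSeries.normedField K hε0 hε1).toNorm f = lval ε f := by
  let := LaurentSeries.normedField K hε0 hε1
  rcases eq_or_ne f 0 with rfl | hf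
  · simp [lval]
  · show ((WithZeroMulInt.toNNReal (zero_lt_one.trans (Real.one_lt_toNNReal_inv hε0 hε1)).ne'
      (MonoidWithZeroHom.ValueGroup₀.embedding (Valued.v.restrict f)) : ℝ≥0) : ℝ) = _
    rw [Valuation.embedding_restrict, valuation_eq_exp_neg_order hf,
      WithZeroMulInt.toNNReal_neg_apply _ WithZero.exp_ne_zero, WithZero.toAdd_unzero_eq_log]
    simp [lval, hf, Real.coe_toNNReal _ (inv_pos.mpr hε0).le]

end LaurentSeriesNorm

theorem lval_neg_one {k : Type*} [Field k] (ε : ℝ) : lval ε (-1 : LaurentSeries k) = 1 := by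
  simp [lval, HahnSeries.order_neg]

namespace NANorm

variable {k : Type*} [Field k] {ε : ℝ} {V : Type*} [AddCommGroup V]
  [Module (LaurentSeries k) V]

theorem N_nonneg (nn : NANorm k ε V) (v : V) : 0 ≤ nn.N v := by
  rcases eq_or_ne v 0 with rfl | hv
  · exact nn.map_zero'.ge
  · exact (nn.pos v hv).le

theorem N_add_le (nn : NANorm k ε V) (v w : V) : nn.N (v + w) ≤ nn.N v + nn.N w :=
  (nn.ultra v w).trans (max_le_add_of_nonneg (nn.N_nonneg v) (nn.N_nonneg w))

theorem N_neg (nn : NANorm k ε V) (v : V) : nn.N (-v) = nn.N v := by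
  rw [← neg_one_smul (LaurentSeries k) v, nn.smul', lval_neg_one, one_mul]

@[reducible]
def toNormedAddCommGroup (nn : NANorm k ε V) : NormedAddCommGroup V :=
  AddGroupNorm.toNormedAddCommGroup
    { toFun := nn.N
      map_zero' := nn.map_zero'
      add_le' := nn.N_add_le
      neg' := nn.N_neg
      eq_zero_of_map_eq_zero' := fun v hv => by_contra fun hne => (nn.pos v hne).ne' hv }

theorem N_sum_le (nn : NANorm k ε V) {ι : Type*} (s : Finset ι) (x : ι → V) :
    nn.N (∑ i ∈ s, x i) ≤ ∑ i ∈ s, nn.N (x i) :=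
  let := nn.toNormedAddCommGroup
  norm_sum_le s x

theorem exists_lval_le_mul (hε0 : 0 < ε) (hε1 : ε < 1) [FiniteDimensional (LaurentSeries k) V]
    (nn : NANorm k ε V) (l : V →ₗ[LaurentSeries k] LaurentSeries k) :
    ∃ C > 0, ∀ v, lval ε (l v) ≤ C * nn.N v := by
  let := LaurentSeries.normedField k hε0 hε1
  let := nn.toNormedAddCommGroup
  let : NormedSpace (LaurentSeries k) V :=
    { norm_smul_le f v := by rw [LaurentSeries.norm_eq_lval hε0 hε1]; exact (nn.smul' f v).le }
  obtain ⟨C, hC0, hC⟩ := (⟨l, l.continuous_of_finiteDimensional⟩ : V →L[LaurentSeries k] _).bound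
  exact ⟨C, hC0, fun v => (LaurentSeries.norm_eq_lval hε0 hε1 (l v)).symm.trans_le (hC v)⟩

theorem exists_N_le_mul (hε0 : 0 < ε) (hε1 : ε < 1) [FiniteDimensional (LaurentSeries k) V]
    (nn₁ nn₂ : NANorm k ε V) : ∃ C > 0, ∀ v, nn₁.N v ≤ C * nn₂.N v := by
  let b := Module.finBasis (LaurentSeries k) V
  choose E hE0 hE using fun i => nn₂.exists_lval_le_mul hε0 hε1 (b.coord i)
  have hsum : 0 ≤ ∑ i, E i * nn₁.N (b i) :=
    Finset.sum_nonneg fun i _ => mul_nonneg (hE0 i).le (nn₁.N_nonneg _)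
  refine ⟨∑ i, E i * nn₁.N (b i) + 1, by linarith, fun v => ?_⟩
  calc nn₁.N v = nn₁.N (∑ i, b.repr v i • b i) := by rw [b.sum_repr v]
    _ ≤ ∑ i, lval ε (b.repr v i) * nn₁.N (b i) := by
      simpa only [nn₁.smul'] using nn₁.N_sum_le Finset.univ fun i => b.repr v i • b i
    _ ≤ ∑ i, E i * nn₂.N v * nn₁.N (b i) := by
      gcongr with i
      · exact nn₁.N_nonneg _
      · exact hE i v
    _ = (∑ i, E i * nn₁.N (b i)) * nn₂.N v := by
      rw [Finset.sum_mul]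
      exact Finset.sum_congr rfl fun i _ => by ring
    _ ≤ (∑ i, E i * nn₁.N (b i) + 1) * nn₂.N v := by
      gcongr
      · exact nn₂.N_nonneg v
      · linarith

end NANorm

theorem le_of_forall_pow_le_mul_pow {a b C : ℝ} (hb : 0 ≤ b) (h : ∀ n : ℕ, a ^ n ≤ C * b ^ n) :
    a ≤ b := by
  by_contra! hba
  have ha : 0 < a := hb.trans_lt hba
  have hlim : Filter.Tendsto (fun n : ℕ => C * (b / a) ^ n) Filter.atTop (nhds 0) := by
    simpa using (tendsto_pow_atTop_nhds_zero_of_lt_one (div_nonneg hb ha.le)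
      ((div_lt_one ha).mpr hba)).const_mul C
  obtain ⟨n, hn⟩ := (hlim.eventually (gt_mem_nhds one_pos)).exists
  rw [div_pow, mul_div_assoc', div_lt_one (pow_pos ha n)] at hn
  exact (h n).not_gt hn

theorem apply_iterate_le_pow_mul {α : Type*} {f : α → ℝ} {g : α → α} {s : ℝ} (hs : 0 ≤ s)
    (h : ∀ x, f (g x) ≤ s * f x) (n : ℕ) (x : α) : f (g^[n] x) ≤ s ^ n * f x := by
  induction n with
  | zero => simp
  | succ n ih =>
    calc f (g^[n + 1] x) ≤ s * f (g^[n] x) := by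
          rw [Function.iterate_succ_apply']; exact h _
      _ ≤ s * (s ^ n * f x) := by gcongr
      _ = s ^ (n + 1) * f x := by ring

theorem apply_iterate_eq_pow_mul {α : Type*} {f : α → ℝ} {g : α → α} {c : ℝ}
    (h : ∀ x, f (g x) = c * f x) (n : ℕ) (x : α) : f (g^[n] x) = c ^ n * f x := by
  rw [(Function.Semiconj.iterate_right h n) x, mul_left_iterate_apply]

section OperatorNorm

variable {k : Type*} [Field k] {ε : ℝ} {V : Type*} [AddCommGroup V]
  [Module (LaurentSeries k) V]

theorem opNorm_nonneg (nn : NANorm k ε V) (A : V → V) : 0 ≤ opNorm nn A :=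
  Real.sSup_nonneg fun _ ⟨v, _, hr⟩ => hr ▸ div_nonneg (nn.N_nonneg _) (nn.N_nonneg v)

theorem bddAbove_of_opNorm_ne_zero {nn : NANorm k ε V} {A : V → V} (h : opNorm nn A ≠ 0) :
    BddAbove {r : ℝ | ∃ v : V, v ≠ 0 ∧ r = nn.N (A v) / nn.N v} := by
  by_contra hb
  exact h (Real.sSup_of_not_bddAbove hb)

theorem bddAbove_of_N_apply_le_mul {nn : NANorm k ε V} {A : V → V} {C : ℝ}
    (h : ∀ v, nn.N (A v) ≤ C * nn.N v) :
    BddAbove {r : ℝ | ∃ v : V, v ≠ 0 ∧ r = nn.N (A v) / nn.N v} := by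
  refine ⟨C, ?_⟩
  rintro _ ⟨v, hv, rfl⟩
  exact (div_le_iff₀ (nn.pos v hv)).mpr (h v)

theorem N_apply_le_opNorm_mul {nn : NANorm k ε V} {A : V →+ V}
    (hA : BddAbove {r : ℝ | ∃ v : V, v ≠ 0 ∧ r = nn.N (A v) / nn.N v}) (v : V) :
    nn.N (A v) ≤ opNorm nn A * nn.N v := by
  rcases eq_or_ne v 0 with rfl | hv
  · simp [nn.map_zero']
  · exact (div_le_iff₀ (nn.pos v hv)).mp (le_csSup hA ⟨v, hv, rfl⟩)

theorem N_apply_eq_opNorm_mul_of_opNorm_mul_opNorm_symm_eq_one (nn : NANorm k ε V) (A : V ≃+ V)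
    (h : opNorm nn A * opNorm nn A.symm = 1) (v : V) : nn.N (A v) = opNorm nn A * nn.N v := by
  have hA := bddAbove_of_opNorm_ne_zero (left_ne_zero_of_mul_eq_one h)
  have hA' := bddAbove_of_opNorm_ne_zero (right_ne_zero_of_mul_eq_one h)
  refine le_antisymm (N_apply_le_opNorm_mul (A := A.toAddMonoidHom) hA v) ?_
  calc opNorm nn A * nn.N v = opNorm nn A * nn.N (A.symm (A v)) := by rw [A.symm_apply_apply]
    _ ≤ opNorm nn A * (opNorm nn A.symm * nn.N (A v)) := by
      gcongr
      · exact opNorm_nonneg nn A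
      · exact N_apply_le_opNorm_mul (A := A.symm.toAddMonoidHom) hA' _
    _ = nn.N (A v) := by rw [← mul_assoc, h, one_mul]

theorem nontrivial_of_opNorm_ne_zero {nn : NANorm k ε V} {A : V → V} (h : opNorm nn A ≠ 0) :
    Nontrivial V := by
  by_contra hV
  rw [not_nontrivial_iff_subsingleton] at hV
  refine h (Real.sSup_empty ▸ congrArg sSup (Set.eq_empty_of_forall_notMem ?_))
  rintro _ ⟨v, hv, -⟩
  exact hv (Subsingleton.elim v 0)

theorem le_opNorm_of_N_apply_eq_mul (hε0 : 0 < ε) (hε1 : ε < 1)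
    [FiniteDimensional (LaurentSeries k) V] [Nontrivial V] (nn nn' : NANorm k ε V)
    (A : V →+ V) {c : ℝ} (hA : ∀ v, nn.N (A v) = c * nn.N v) : c ≤ opNorm nn' A := by
  obtain ⟨C₁, hC₁, h₁⟩ := nn.exists_N_le_mul hε0 hε1 nn'
  obtain ⟨C₂, hC₂, h₂⟩ := nn'.exists_N_le_mul hε0 hε1 nn
  obtain ⟨v₀, hv₀⟩ := exists_ne (0 : V)
  have hc : 0 ≤ c := nonneg_of_mul_nonneg_left (hA v₀ ▸ nn.N_nonneg (A v₀)) (nn.pos v₀ hv₀)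
  have hbdd : BddAbove {r : ℝ | ∃ v : V, v ≠ 0 ∧ r = nn'.N (A v) / nn'.N v} :=
    bddAbove_of_N_apply_le_mul (C := C₂ * c * C₁) fun v => calc
      nn'.N (A v) ≤ C₂ * (c * nn.N v) := hA v ▸ h₂ _
      _ ≤ C₂ * (c * (C₁ * nn'.N v)) := by gcongr; exact h₁ v
      _ = C₂ * c * C₁ * nn'.N v := by ring
  have hs := opNorm_nonneg nn' A
  refine le_of_forall_pow_le_mul_pow (C := C₁ * C₂) hs fun n =>
    le_of_mul_le_mul_right ?_ (nn.pos v₀ hv₀)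
  calc c ^ n * nn.N v₀ = nn.N (A^[n] v₀) := (apply_iterate_eq_pow_mul hA n v₀).symm
    _ ≤ C₁ * nn'.N (A^[n] v₀) := h₁ _
    _ ≤ C₁ * (opNorm nn' A ^ n * nn'.N v₀) := by
      gcongr
      exact apply_iterate_le_pow_mul hs (N_apply_le_opNorm_mul hbdd) n v₀
    _ ≤ C₁ * (opNorm nn' A ^ n * (C₂ * nn.N v₀)) := by gcongr; exact h₂ v₀
    _ = C₁ * C₂ * opNorm nn' A ^ n * nn.N v₀ := by ring

end OperatorNorm

theorem opNorm_eq_infNorm_of_mul_inv_eq_one_general (k V : Type*) [Field k]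
    [AddCommGroup V] [Module (LaurentSeries k) V] [Module k V]
    [FiniteDimensional (LaurentSeries k) V]
    (ε : ℝ) (hε0 : 0 < ε) (hε1 : ε < 1)
    (nn : NANorm k ε V) (A : V ≃ₗ[k] V)
    (h : opNorm nn (⇑A) * opNorm nn (⇑A.symm) = 1) :
    opNorm nn (⇑A) = infNorm (k := k) ε (⇑A) := by
  have hA := N_apply_eq_opNorm_mul_of_opNorm_mul_opNorm_symm_eq_one nn A.toAddEquiv h
  have := nontrivial_of_opNorm_ne_zero (left_ne_zero_of_mul_eq_one h)
  refine (IsLeast.csInf_eq (s := {r | ∃ nn' : NANorm k ε V, r = opNorm nn' A})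
    ⟨⟨nn, rfl⟩, ?_⟩).symm
  rintro _ ⟨nn', rfl⟩
  exact le_opNorm_of_N_apply_eq_mul hε0 hε1 nn nn' A.toLinearMap.toAddMonoidHom hA

/-- If `‖A‖ · ‖A⁻¹‖ = 1` for some norm, then `‖A‖` equals the infimum norm of `A`. -/
theorem opNorm_eq_infNorm_of_mul_inv_eq_one (k V : Type*) [Field k] [IsAlgClosed k] [CharZero k]
    [AddCommGroup V] [Module (LaurentSeries k) V] [Module k V]
    [IsScalarTower k (LaurentSeries k) V] [FiniteDimensional (LaurentSeries k) V]
    (ε : ℝ) (hε0 : 0 < ε) (hε1 : ε < 1)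
    (nn : NANorm k ε V) (A : V ≃ₗ[k] V)
    (h : opNorm nn (⇑A) * opNorm nn (⇑A.symm) = 1) :
    opNorm nn (⇑A) = infNorm (k := k) ε (⇑A) :=
  opNorm_eq_infNorm_of_mul_inv_eq_one_general k V ε hε0 hε1 nn A h
end
end

section
/- Let V = k((z)) and ∇ = d/dz + z⁻¹f with f ∈ k[z⁻¹], ord(f) = −m < 0. Then with respect to the norm ||g|| = ε^{ord(g)}, the operator z∇ : V → V is an invertible similitude with ||z∇(v)|| = ε^{−m}||v|| for all v ≠ 0, and consequently ||(z∇)⁻¹||_inf = ε^{m} = ε^{−ord(f)}. -/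
open scoped Classical
noncomputable section

/-- The operator `z∇ : g ↦ z g' + f g` on `K = k((z))`. -/
def zNabla {k : Type*} [Field k] (f : LaurentSeries k) (g : LaurentSeries k) : LaurentSeries k :=
  HahnSeries.single (1 : ℤ) (1 : k) * LaurentSeries.derivative k g + f * g

/-!
Coefficientwise, `(z∇ g)ₙ = n gₙ + ∑_{i=0}^{m} f₋ᵢ gₙ₊ᵢ`, so the matrix of `z∇` in the monomial
basis is banded with the nonzero outer diagonal `f₋ₘ`. Hence `z∇` lowers orders by exactly `m`,
which makes it injective and an `ε^{-m}`-similitude, and `z∇ g = h` can be solved for the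
coefficients of `g` one at a time, from `ord h + m` upwards. Finally, `K` is one-dimensional over
itself, so every admissible norm is a constant multiple of `ε^{ord}`; for each of them the operator
norm of `(z∇)⁻¹` is therefore `ε^m`, and `ε^{ord}` itself is admissible because `ε < 1`.
-/

open HahnSeries

section

variable {k : Type*} [Field k]

section Banded

def HasBandedCoeffs (T : LaurentSeries k → LaurentSeries k) (m : ℕ) (d : k)
    (a : ℤ → Fin m → k) : Prop :=
  ∀ g n, (T g).coeff n = d * g.coeff (n + m) + ∑ i : Fin m, a n i * g.coeff (n + i)

variable {m : ℕ} {d : k} {a : ℤ → Fin m → k}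

/-- The solution of `T g = h` for `T` as in `HasBandedCoeffs`: `gₙ = 0` for `n < ord h + m`, and
`gₙ₊ₘ` is obtained by solving `(T g)ₙ = hₙ` for it. -/
def bandedSolutionCoeff (d : k) (a : ℤ → Fin m → k) (h : LaurentSeries k) (n : ℤ) : k :=
  if n < h.order + m then 0
  else (h.coeff (n - m) - ∑ i : Fin m, a (n - m) i * bandedSolutionCoeff d a h (n - m + i)) / d
termination_by (n - h.order).toNat
decreasing_by have := i.isLt; omega

theorem bandedSolutionCoeff_of_lt (h : LaurentSeries k) {n : ℤ} (hn : n < h.order + m) :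
    bandedSolutionCoeff d a h n = 0 := by
  rw [bandedSolutionCoeff, if_pos hn]

theorem bandedSolutionCoeff_add (h : LaurentSeries k) {n : ℤ} (hn : h.order ≤ n) :
    bandedSolutionCoeff d a h (n + m) =
      (h.coeff n - ∑ i : Fin m, a n i * bandedSolutionCoeff d a h (n + i)) / d := by
  rw [bandedSolutionCoeff, if_neg (by omega), add_sub_cancel_right]

def bandedSolution (d : k) (a : ℤ → Fin m → k) (h : LaurentSeries k) : LaurentSeries k :=
  ofSuppBddBelow (bandedSolutionCoeff d a h)
    ⟨h.order + m, fun _ hn ↦ not_lt.mp fun hlt ↦ hn (bandedSolutionCoeff_of_lt h hlt)⟩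

theorem coeff_bandedSolution (h : LaurentSeries k) :
    (bandedSolution d a h).coeff = bandedSolutionCoeff d a h :=
  rfl

namespace HasBandedCoeffs

variable {T : LaurentSeries k → LaurentSeries k} (hT : HasBandedCoeffs T m d a)
include hT

theorem coeff_order_sub (g : LaurentSeries k) :
    (T g).coeff (g.order - m) = d * g.coeff g.order := by
  rw [hT, sub_add_cancel, add_eq_left]
  refine Finset.sum_eq_zero fun i _ ↦ ?_
  rw [coeff_eq_zero_of_lt_order (by have := i.isLt; omega), mul_zero]

theorem coeff_eq_zero_of_lt (g : LaurentSeries k) {n : ℤ} (hn : n < g.order - m) :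
    (T g).coeff n = 0 := by
  rw [hT, coeff_eq_zero_of_lt_order (by omega), mul_zero, zero_add]
  refine Finset.sum_eq_zero fun i _ ↦ ?_
  rw [coeff_eq_zero_of_lt_order (by have := i.isLt; omega), mul_zero]

theorem coeff_order_sub_ne_zero (hd : d ≠ 0) {g : LaurentSeries k} (hg : g ≠ 0) :
    (T g).coeff (g.order - m) ≠ 0 := by
  rw [hT.coeff_order_sub]
  exact mul_ne_zero hd (mt coeff_order_eq_zero.mp hg)

theorem ne_zero (hd : d ≠ 0) {g : LaurentSeries k} (hg : g ≠ 0) : T g ≠ 0 :=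
  ne_zero_of_coeff_ne_zero (hT.coeff_order_sub_ne_zero hd hg)

theorem order_eq (hd : d ≠ 0) {g : LaurentSeries k} (hg : g ≠ 0) :
    (T g).order = g.order - m := by
  refine le_antisymm (order_le_of_coeff_ne_zero (hT.coeff_order_sub_ne_zero hd hg)) ?_
  rw [le_order_iff_forall (hT.ne_zero hd hg)]
  exact fun n hn ↦ hT.coeff_eq_zero_of_lt g hn

theorem map_sub (g g' : LaurentSeries k) : T (g - g') = T g - T g' := by
  ext n
  simp only [coeff_sub, hT _ n, mul_sub, Finset.sum_sub_distrib]
  ring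

theorem map_zero : T 0 = 0 := by
  simpa using hT.map_sub 0 0

theorem injective (hd : d ≠ 0) : Function.Injective T := fun g g' hgg' ↦ by
  by_contra hne
  exact hT.ne_zero hd (sub_ne_zero.mpr hne) (by rw [hT.map_sub, hgg', sub_self])

theorem apply_bandedSolution (hd : d ≠ 0) (h : LaurentSeries k) :
    T (bandedSolution d a h) = h := by
  ext n
  rw [hT, coeff_bandedSolution]
  by_cases hn : n < h.order
  · rw [coeff_eq_zero_of_lt_order hn, bandedSolutionCoeff_of_lt h (by omega), mul_zero, zero_add]
    refine Finset.sum_eq_zero fun i _ ↦ ?_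
    rw [bandedSolutionCoeff_of_lt h (by have := i.isLt; omega), mul_zero]
  · rw [bandedSolutionCoeff_add h (not_lt.mp hn), mul_div_cancel₀ _ hd, sub_add_cancel]

theorem bijective (hd : d ≠ 0) : Function.Bijective T :=
  ⟨hT.injective hd, fun h ↦ ⟨bandedSolution d a h, hT.apply_bandedSolution hd h⟩⟩

end HasBandedCoeffs

end Banded

section ZNabla

theorem coeff_single_one_mul_derivative (g : LaurentSeries k) (n : ℤ) :
    (single (1 : ℤ) (1 : k) * LaurentSeries.derivative k g).coeff n = n • g.coeff n := by
  rw [coeff_single_mul, one_mul, LaurentSeries.derivative_apply, LaurentSeries.hasseDeriv_coeff,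
    Nat.cast_one, sub_add_cancel, Ring.choose_one_right]

theorem eq_sum_single_of_le_order_of_coeff_pos {m : ℕ} {f : LaurentSeries k}
    (hord : -(m : ℤ) ≤ f.order) (hpos : ∀ n : ℤ, 0 < n → f.coeff n = 0) :
    f = ∑ i ∈ Finset.range (m + 1), single (-(i : ℤ)) (f.coeff (-(i : ℤ))) := by
  ext j
  simp only [coeff_sum, coeff_single]
  by_cases hj : -(m : ℤ) ≤ j ∧ j ≤ 0
  · rw [Finset.sum_eq_single_of_mem (-j).toNat (by simp only [Finset.mem_range]; omega)]
    · rw [if_pos (by omega), show -((-j).toNat : ℤ) = j by omega]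
    · exact fun i _ hi ↦ if_neg (by omega)
  · have hj0 : f.coeff j = 0 := by
      rcases not_and_or.mp hj with hj | hj
      · exact coeff_eq_zero_of_lt_order (by omega)
      · exact hpos j (by omega)
    rw [hj0]
    exact (Finset.sum_eq_zero fun i hi ↦
      if_neg (by have := Finset.mem_range.mp hi; omega)).symm

theorem coeff_mul_of_le_order_of_coeff_pos {m : ℕ} {f : LaurentSeries k}
    (hord : -(m : ℤ) ≤ f.order) (hpos : ∀ n : ℤ, 0 < n → f.coeff n = 0)
    (g : LaurentSeries k) (n : ℤ) :
    (f * g).coeff n = ∑ i ∈ Finset.range (m + 1), f.coeff (-(i : ℤ)) * g.coeff (n + i) := by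
  conv_lhs => rw [eq_sum_single_of_le_order_of_coeff_pos hord hpos, Finset.sum_mul, coeff_sum]
  refine Finset.sum_congr rfl fun i _ ↦ ?_
  rw [coeff_single_mul, sub_neg_eq_add]

theorem hasBandedCoeffs_zNabla {m : ℕ} (hm : 0 < m) {f : LaurentSeries k}
    (hord : -(m : ℤ) ≤ f.order) (hpos : ∀ n : ℤ, 0 < n → f.coeff n = 0) :
    HasBandedCoeffs (zNabla f) m (f.coeff (-(m : ℤ)))
      (fun n i ↦ f.coeff (-(i : ℤ)) + if (i : ℕ) = 0 then (n : k) else 0) := by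
  intro g n
  have hdiag : (n : k) * g.coeff n =
      ∑ i : Fin m, (if (i : ℕ) = 0 then (n : k) else 0) * g.coeff (n + i) := by
    rw [Fin.sum_univ_eq_sum_range (fun i ↦ (if i = 0 then (n : k) else 0) * g.coeff (n + i))]
    simp only [ite_mul, zero_mul, Finset.sum_ite_eq', Finset.mem_range, if_pos hm,
      Nat.cast_zero, add_zero]
  rw [zNabla, coeff_add, coeff_single_one_mul_derivative, zsmul_eq_mul, hdiag,
    coeff_mul_of_le_order_of_coeff_pos hord hpos, Finset.sum_range_succ,
    ← Fin.sum_univ_eq_sum_range (fun i ↦ f.coeff (-(i : ℤ)) * g.coeff (n + i))]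
  simp only [add_mul, Finset.sum_add_distrib]
  ring

end ZNabla

section Norms

variable {ε : ℝ}

theorem lval_of_ne_zero {g : LaurentSeries k} (hg : g ≠ 0) : lval ε g = ε ^ g.order :=
  if_neg hg

theorem lval_pos (hε : 0 < ε) {g : LaurentSeries k} (hg : g ≠ 0) : 0 < lval ε g := by
  rw [lval_of_ne_zero hg]
  exact zpow_pos hε _

theorem lval_nonneg (hε : 0 < ε) (g : LaurentSeries k) : 0 ≤ lval ε g := by
  rcases eq_or_ne g 0 with rfl | hg
  · simp [lval]
  · exact (lval_pos hε hg).le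

theorem lval_mul (hε : ε ≠ 0) (f g : LaurentSeries k) :
    lval ε (f * g) = lval ε f * lval ε g := by
  rcases eq_or_ne f 0 with rfl | hf
  · simp [lval]
  rcases eq_or_ne g 0 with rfl | hg
  · simp [lval]
  rw [lval_of_ne_zero (mul_ne_zero hf hg), lval_of_ne_zero hf, lval_of_ne_zero hg,
    order_mul hf hg, zpow_add₀ hε]

theorem lval_add_le (hε0 : 0 < ε) (hε1 : ε ≤ 1) (v w : LaurentSeries k) :
    lval ε (v + w) ≤ max (lval ε v) (lval ε w) := by
  rcases eq_or_ne v 0 with rfl | hv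
  · simp
  rcases eq_or_ne w 0 with rfl | hw
  · simp
  rcases eq_or_ne (v + w) 0 with hvw | hvw
  · rw [hvw, lval, if_pos rfl]
    exact le_max_of_le_left (lval_nonneg hε0 v)
  rw [lval_of_ne_zero hvw, lval_of_ne_zero hv, lval_of_ne_zero hw,
    ← (zpow_right_anti₀ hε0 hε1).map_min]
  exact zpow_le_zpow_right_of_le_one₀ hε0 hε1 (min_order_le_order_add hvw)

def lvalNANorm (hε0 : 0 < ε) (hε1 : ε ≤ 1) : NANorm k ε (LaurentSeries k) where
  N := lval ε
  pos _ := lval_pos hε0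
  map_zero' := if_pos rfl
  ultra := lval_add_le hε0 hε1
  smul' := lval_mul hε0.ne'

theorem NANorm.N_eq_lval_mul (nn : NANorm k ε (LaurentSeries k)) (v : LaurentSeries k) :
    nn.N v = lval ε v * nn.N 1 := by
  simpa using nn.smul' v 1

theorem opNorm_eq_of_lval_apply (hε : 0 < ε) (nn : NANorm k ε (LaurentSeries k))
    {A : LaurentSeries k → LaurentSeries k} {c : ℝ}
    (hA : ∀ v, v ≠ 0 → lval ε (A v) = c * lval ε v) : opNorm nn A = c := by
  have hratio : ∀ v, v ≠ 0 → nn.N (A v) / nn.N v = c := fun v hv ↦ by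
    have := lval_pos hε hv
    have := nn.pos 1 one_ne_zero
    rw [nn.N_eq_lval_mul (A v), nn.N_eq_lval_mul v, hA v hv]
    field_simp
  have hset : {r : ℝ | ∃ v, v ≠ 0 ∧ r = nn.N (A v) / nn.N v} = {c} := by
    ext r
    constructor
    · rintro ⟨v, hv, rfl⟩
      exact hratio v hv
    · rintro rfl
      exact ⟨1, one_ne_zero, (hratio 1 one_ne_zero).symm⟩
  rw [opNorm, hset, csSup_singleton]

theorem infNorm_eq_of_lval_apply (hε0 : 0 < ε) (hε1 : ε ≤ 1)
    {A : LaurentSeries k → LaurentSeries k} {c : ℝ}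
    (hA : ∀ v, v ≠ 0 → lval ε (A v) = c * lval ε v) : infNorm (k := k) ε A = c := by
  have hset : {r : ℝ | ∃ nn : NANorm k ε (LaurentSeries k), r = opNorm nn A} = {c} := by
    ext r
    constructor
    · rintro ⟨nn, rfl⟩
      exact opNorm_eq_of_lval_apply hε0 nn hA
    · rintro rfl
      exact ⟨lvalNANorm hε0 hε1, (opNorm_eq_of_lval_apply hε0 _ hA).symm⟩
  rw [infNorm, hset, csInf_singleton]

end Norms

namespace HasBandedCoeffs

variable {ε : ℝ} {m : ℕ} {d : k} {a : ℤ → Fin m → k}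
  {T : LaurentSeries k → LaurentSeries k} (hT : HasBandedCoeffs T m d a)
include hT

theorem lval_apply (hε : ε ≠ 0) (hd : d ≠ 0) {g : LaurentSeries k} (hg : g ≠ 0) :
    lval ε (T g) = ε ^ (-(m : ℤ)) * lval ε g := by
  rw [lval_of_ne_zero (hT.ne_zero hd hg), lval_of_ne_zero hg, hT.order_eq hd hg, sub_eq_neg_add,
    zpow_add₀ hε]

theorem lval_invFun_apply (hε : ε ≠ 0) (hd : d ≠ 0) {v : LaurentSeries k} (hv : v ≠ 0) :
    lval ε (Function.invFun T v) = ε ^ (m : ℤ) * lval ε v := by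
  have hTv : T (Function.invFun T v) = v := Function.invFun_eq ((hT.bijective hd).2 v)
  have hne : Function.invFun T v ≠ 0 := fun h0 ↦ hv (by rw [← hTv, h0, hT.map_zero])
  rw [← hTv, hT.lval_apply hε hd hne, hTv, ← mul_assoc, ← zpow_add₀ hε, add_neg_cancel,
    zpow_zero, one_mul]

end HasBandedCoeffs

end

theorem zNabla_similitude_general (k : Type*) [Field k]
    (ε : ℝ) (hε0 : 0 < ε) (hε1 : ε < 1)
    (m : ℕ) (hm : 0 < m) (f : LaurentSeries k) (hford : HahnSeries.order f = -(m : ℤ))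
    (hpoly : ∀ n : ℤ, 0 < n → f.coeff n = 0) :
    Function.Bijective (zNabla f) ∧
    (∀ v : LaurentSeries k, v ≠ 0 → lval ε (zNabla f v) = ε ^ (-(m : ℤ)) * lval ε v) ∧
    infNorm (k := k) ε (Function.invFun (zNabla f)) = ε ^ (m : ℤ) := by
  have hT := hasBandedCoeffs_zNabla hm hford.ge hpoly
  have hf : f ≠ 0 := fun h ↦ by rw [h, order_zero] at hford; omega
  have hd : f.coeff (-(m : ℤ)) ≠ 0 := hford ▸ mt coeff_order_eq_zero.mp hf
  exact ⟨hT.bijective hd, fun _ ↦ hT.lval_apply hε0.ne' hd,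
    infNorm_eq_of_lval_apply hε0 hε1.le fun _ ↦ hT.lval_invFun_apply hε0.ne' hd⟩

/-- For `∇ = d/dz + z⁻¹f` with `f ∈ k[z⁻¹]` of order `-m < 0`, the operator `z∇` is an
invertible similitude of ratio `ε^{-m}` for the standard norm `‖g‖ = ε^{ord g}`,
and `‖(z∇)⁻¹‖_inf = ε^m = ε^{-ord f}`. -/
theorem zNabla_similitude (k : Type*) [Field k] [IsAlgClosed k] [CharZero k]
    (ε : ℝ) (hε0 : 0 < ε) (hε1 : ε < 1)
    (m : ℕ) (hm : 0 < m) (f : LaurentSeries k) (hford : HahnSeries.order f = -(m : ℤ))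
    (hpoly : ∀ n : ℤ, 0 < n → f.coeff n = 0) :
    Function.Bijective (zNabla f) ∧
    (∀ v : LaurentSeries k, v ≠ 0 → lval ε (zNabla f v) = ε ^ (-(m : ℤ)) * lval ε v) ∧
    infNorm (k := k) ε (Function.invFun (zNabla f)) = ε ^ (m : ℤ) :=
  zNabla_similitude_general k ε hε0 hε1 m hm f hford hpoly
end
end

section
/- Let V be a finite-dimensional K-vector space with connection ∇ satisfying [∇, z] = 1, with z∇ invertible, and set θ = −(z∇)⁻¹. Then multiplication by z, viewed as an operator Φ on V, satisfies Φ(θ v) = (θ(1+θ)⁻¹) Φ(v) for all v ∈ V, i.e. Φθ = θ(1+θ)⁻¹Φ as operators (where (1+θ)⁻¹ = Σ_{i≥0} (−θ)^i, which converges since θ is topologically nilpotent). -/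
open scoped Classical
noncomputable section

/-- `Φθ = θ(1+θ)⁻¹Φ` for `θ = -(z∇)⁻¹` and `Φ = z` on a vector space with connection
`∇` (satisfying `[∇,z]=1`), where `(1+θ)⁻¹` makes sense since `1+θ` is invertible
(`θ` being topologically nilpotent). -/
theorem phi_theta_identity (k V : Type*) [Field k] [IsAlgClosed k] [CharZero k]
    [AddCommGroup V] [Module (LaurentSeries k) V] [Module k V]
    [IsScalarTower k (LaurentSeries k) V] [FiniteDimensional (LaurentSeries k) V]
    (nab : V →ₗ[k] V)
    (leibniz : ∀ (f : LaurentSeries k) (v : V),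
      nab (f • v) = f • nab v + (LaurentSeries.derivative k f) • v)
    (theta : V → V)
    -- `θ` is a two-sided inverse of `-(z∇)`:
    (htheta₁ : ∀ v : V, (HahnSeries.single (1 : ℤ) (1 : k) : LaurentSeries k) •
      nab (theta v) = -v)
    (htheta₂ : ∀ v : V, theta
      ((HahnSeries.single (1 : ℤ) (1 : k) : LaurentSeries k) • nab v) = -v)
    -- `1 + θ` is invertible (its inverse is the convergent series `Σ (-θ)^i`,
    -- `θ` being topologically nilpotent):
    (hone : Function.Bijective fun v : V => v + theta v) :
    ∀ v : V,
      (HahnSeries.single (1 : ℤ) (1 : k) : LaurentSeries k) • theta v =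
        theta ((Function.invFun fun w : V => w + theta w)
          ((HahnSeries.single (1 : ℤ) (1 : k) : LaurentSeries k) • v)) := by
  intro v
  set z : LaurentSeries k := HahnSeries.single (1 : ℤ) (1 : k) with hz
  set L : V → V := fun w => z • nab w with hLdef
  have hderiv : LaurentSeries.derivative k z = 1 := by
    rw [hz, LaurentSeries.derivative_apply, LaurentSeries.hasseDeriv_single]
    norm_num [Ring.choose]
  -- L is additive
  have hLadd : ∀ a b : V, L (a + b) = L a + L b := by
    intro a b; simp [hLdef, map_add, smul_add]
  have hLneg : ∀ a : V, L (-a) = -L a := by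
    intro a; simp [hLdef, map_neg]
  -- L (theta a) = -a and theta (L a) = -a
  have hLt : ∀ a : V, L (theta a) = -a := htheta₁
  have htL : ∀ a : V, theta (L a) = -a := htheta₂
  -- every a equals L (-theta a)
  have hrep : ∀ a : V, L (-theta a) = a := by
    intro a; rw [hLneg, hLt, neg_neg]
  -- theta is additive
  have htadd : ∀ a b : V, theta (a + b) = theta a + theta b := by
    intro a b
    have := htL (-theta a + -theta b)
    rw [hLadd, hrep, hrep] at this
    rw [this, neg_add, neg_neg, neg_neg]
  -- L (z • w) = z • L w + z • w
  have hLz : ∀ w : V, L (z • w) = z • L w + z • w := by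
    intro w
    simp only [hLdef]
    rw [leibniz z w, hderiv, one_smul, smul_add, smul_smul]
  -- L is injective
  have hLinj : ∀ a b : V, L a = L b → a = b := by
    intro a b h
    have := congrArg theta h
    rw [htL, htL] at this
    exact neg_injective this
  -- key identity: z • theta v + theta (z • theta v) = theta (z • v)
  have key : z • theta v + theta (z • theta v) = theta (z • v) := by
    apply hLinj
    rw [hLadd, hLz, hLt, hLt, hLt, smul_neg]
    abel
  -- unfold invFun
  set u : V := (Function.invFun fun w : V => w + theta w) (z • v) with hu
  have hu2 : u + theta u = z • v := by
    have := Function.rightInverse_invFun hone.2 (z • v)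
    simpa [hu] using this
  apply hone.1
  show z • theta v + theta (z • theta v) = theta u + theta (theta u)
  rw [key, ← hu2, htadd]
end
end

section
/- A vector space V over K = k((y)) that is of Tate type as a k[[y]]-module is finite-dimensional over K, and conversely every finite-dimensional K-vector space is of Tate type. -/
/-!
If `M' = span_{k[[y]]} S` has torsion quotient, every vector has a nonzero power-series multiple
in `M'`, so `S` spans `V` over `K = k((y))`. Conversely, for a `K`-basis `b` take `M'` to be the
`k[[y]]`-span of `b`: a vector lies in `M'` iff its coordinates are power series, so `V/M'` is
torsion by clearing denominators, and a class killed by `y` has coordinates in `y⁻¹ k[[y]]`,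
hence lies in the `k`-span of the classes of the `y⁻¹ b i`.
-/

open scoped Classical
noncomputable section

/-- A `k[[y]]`-module `M` is of Tate type if it has a finitely generated submodule `M'`
such that `M/M'` is torsion and the `y`-annihilator of `M/M'` is finite-dimensional
over `k`. -/
def IsTateType (k M : Type*) [Field k] [AddCommGroup M] [Module k M]
    [Module (PowerSeries k) M] [IsScalarTower k (PowerSeries k) M] : Prop :=
  ∃ M' : Submodule (PowerSeries k) M, M'.FG ∧
    (∀ x : M ⧸ M', ∃ f : PowerSeries k, f ≠ 0 ∧ f • x = 0) ∧
    FiniteDimensional k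
      (LinearMap.ker ((Algebra.lsmul k k (M ⧸ M') (PowerSeries.X : PowerSeries k) :
        (M ⧸ M') →ₗ[k] (M ⧸ M'))))

theorem Submodule.span_eq_top_of_exists_smul_quotient_eq_zero {R K V : Type*} [CommRing R]
    [Field K] [Algebra R K] [FaithfulSMul R K] [AddCommGroup V] [Module R V] [Module K V]
    [IsScalarTower R K V] (N : Submodule R V)
    (htor : ∀ x : V ⧸ N, ∃ r : R, r ≠ 0 ∧ r • x = 0) : span K (N : Set V) = ⊤ := by
  refine eq_top_iff.2 fun v _ => ?_
  obtain ⟨r, hr, hrv⟩ := htor (Submodule.Quotient.mk v)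
  rw [← Submodule.Quotient.mk_smul, Submodule.Quotient.mk_eq_zero] at hrv
  have hr' : algebraMap R K r ≠ 0 :=
    (map_ne_zero_iff _ (FaithfulSMul.algebraMap_injective R K)).2 hr
  have hv : v = (algebraMap R K r)⁻¹ • r • v := by
    rw [← IsScalarTower.algebraMap_smul K r v, inv_smul_smul₀ hr']
  rw [hv]
  exact smul_mem _ _ (subset_span hrv)

namespace Module.Basis

variable {R K V ι : Type*} [CommRing R] [CommRing K] [Algebra R K] [AddCommGroup V] [Module R V]
  [Module K V] [IsScalarTower R K V] (b : Basis ι K V)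

theorem repr_smul_of_tower (r : R) (v : V) (i : ι) :
    b.repr (r • v) i = algebraMap R K r * b.repr v i := by
  rw [← IsScalarTower.algebraMap_smul K r v, map_smul, Finsupp.smul_apply, smul_eq_mul]

theorem mem_span_iff_isInteger_repr {v : V} :
    v ∈ Submodule.span R (Set.range b) ↔ ∀ i, IsLocalization.IsInteger R (b.repr v i) := by
  refine ⟨fun hv i => ?_, fun hv => ?_⟩
  · induction hv using Submodule.span_induction with
    | mem x hx =>
      obtain ⟨j, rfl⟩ := hx
      rw [b.repr_self, Finsupp.single_apply]
      split_ifs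
      exacts [IsLocalization.isInteger_one, IsLocalization.isInteger_zero]
    | zero => simpa using IsLocalization.isInteger_zero
    | add x y _ _ hx hy => simpa using IsLocalization.isInteger_add hx hy
    | smul r x _ hx =>
      rw [b.repr_smul_of_tower, ← Algebra.smul_def]
      exact IsLocalization.isInteger_smul hx
  · rw [← b.linearCombination_repr v, Finsupp.linearCombination_apply]
    refine Submodule.finsuppSum_mem _ _ _ _ fun i _ => ?_
    obtain ⟨r, hr⟩ := hv i
    rw [← hr, IsScalarTower.algebraMap_smul]
    exact Submodule.smul_mem _ _ (Submodule.subset_span ⟨i, rfl⟩)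

theorem exists_smul_eq_zero_quotient_span_range [Nontrivial R] [IsFractionRing R K]
    (x : V ⧸ Submodule.span R (Set.range b)) : ∃ r : R, r ≠ 0 ∧ r • x = 0 := by
  obtain ⟨v, rfl⟩ := Submodule.Quotient.mk_surjective _ x
  obtain ⟨r, hr⟩ := IsLocalization.exist_integer_multiples (nonZeroDivisors R)
    (b.repr v).support (b.repr v)
  refine ⟨r, nonZeroDivisors.coe_ne_zero r, ?_⟩
  rw [← Submodule.Quotient.mk_smul, Submodule.Quotient.mk_eq_zero,
    b.mem_span_iff_isInteger_repr]
  intro i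
  rw [b.repr_smul_of_tower, ← Algebra.smul_def]
  by_cases hi : i ∈ (b.repr v).support
  · exact hr i hi
  · rw [Finsupp.notMem_support_iff.1 hi, smul_zero]
    exact IsLocalization.isInteger_zero

end Module.Basis

namespace LaurentSeries

open scoped PowerSeries

variable {k : Type*} [Field k]

theorem exists_isInteger_sub_C_mul_inv_X {a : k⸨X⸩}
    (ha : IsLocalization.IsInteger k⟦X⟧ (algebraMap k⟦X⟧ k⸨X⸩ PowerSeries.X * a)) :
    ∃ c : k, IsLocalization.IsInteger k⟦X⟧
      (a - algebraMap k⟦X⟧ k⸨X⸩ (PowerSeries.C c) * (algebraMap k⟦X⟧ k⸨X⸩ PowerSeries.X)⁻¹) := by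
  obtain ⟨g, hg⟩ := ha
  have hX : algebraMap k⟦X⟧ k⸨X⸩ PowerSeries.X ≠ 0 :=
    (map_ne_zero_iff _ (IsFractionRing.injective _ _)).2 PowerSeries.X_ne_zero
  set c := PowerSeries.constantCoeff g
  set s := PowerSeries.mk fun p => PowerSeries.coeff (p + 1) g
  have ha' : a = (algebraMap k⟦X⟧ k⸨X⸩ PowerSeries.X)⁻¹ *
      algebraMap k⟦X⟧ k⸨X⸩ (PowerSeries.X * s + PowerSeries.C c) := by
    rw [← g.eq_X_mul_shift_add_const, hg, inv_mul_cancel_left₀ hX]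
  refine ⟨c, s, ?_⟩
  rw [ha', map_add, map_mul, mul_add, inv_mul_cancel_left₀ hX]
  ring

end LaurentSeries

namespace Module.Basis

open scoped LaurentSeries PowerSeries

variable {k V ι : Type*} [Field k] [AddCommGroup V] [Module k⸨X⸩ V] [Module k⟦X⟧ V] [Module k V]
  [IsScalarTower k k⟦X⟧ V] [IsScalarTower k⟦X⟧ k⸨X⸩ V] [Fintype ι] (b : Basis ι k⸨X⸩ V)

theorem ker_lsmul_X_quotient_span_le_span :
    LinearMap.ker
        (Algebra.lsmul k k (V ⧸ Submodule.span k⟦X⟧ (Set.range b)) (PowerSeries.X : k⟦X⟧)) ≤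
      Submodule.span k (Set.range fun i => Submodule.Quotient.mk
        ((algebraMap k⟦X⟧ k⸨X⸩ PowerSeries.X)⁻¹ • b i)) := by
  intro x hx
  obtain ⟨v, rfl⟩ := Submodule.Quotient.mk_surjective _ x
  set L := Submodule.span k⟦X⟧ (Set.range b)
  set y := algebraMap k⟦X⟧ k⸨X⸩ PowerSeries.X
  have hXv : (PowerSeries.X : k⟦X⟧) • v ∈ L := by
    rw [← Submodule.Quotient.mk_eq_zero, Submodule.Quotient.mk_smul]
    exact hx
  choose c hc using fun i => LaurentSeries.exists_isInteger_sub_C_mul_inv_X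
    (b.repr_smul_of_tower (PowerSeries.X : k⟦X⟧) v i ▸ b.mem_span_iff_isInteger_repr.1 hXv i)
  set u := ∑ i, (algebraMap k⟦X⟧ k⸨X⸩ (PowerSeries.C (c i)) * y⁻¹) • b i
  have hvu : v - u ∈ L := b.mem_span_iff_isInteger_repr.2 fun i => by
    rw [map_sub, Finsupp.coe_sub, Pi.sub_apply, b.repr_sum_self]
    exact hc i
  have hu : (Submodule.Quotient.mk u : V ⧸ L) =
      ∑ i, c i • Submodule.Quotient.mk (y⁻¹ • b i) := by
    rw [← Submodule.mkQ_apply, map_sum]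
    refine Finset.sum_congr rfl fun i _ => ?_
    rw [mul_smul, IsScalarTower.algebraMap_smul, ← PowerSeries.algebraMap_eq,
      IsScalarTower.algebraMap_smul, Submodule.mkQ_apply, Submodule.Quotient.mk_smul]
  rw [← sub_add_cancel v u, Submodule.Quotient.mk_add, (Submodule.Quotient.mk_eq_zero _).2 hvu,
    zero_add, hu]
  exact Submodule.sum_mem _ fun i _ => Submodule.smul_mem _ _ (Submodule.subset_span ⟨i, rfl⟩)

theorem finiteDimensional_ker_lsmul_X_quotient_span :
    FiniteDimensional k (LinearMap.ker
      (Algebra.lsmul k k (V ⧸ Submodule.span k⟦X⟧ (Set.range b)) (PowerSeries.X : k⟦X⟧))) :=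
  have := FiniteDimensional.span_of_finite k (Set.finite_range fun i =>
    Submodule.Quotient.mk (p := Submodule.span k⟦X⟧ (Set.range b))
      ((algebraMap k⟦X⟧ k⸨X⸩ PowerSeries.X)⁻¹ • b i))
  Submodule.finiteDimensional_of_le b.ker_lsmul_X_quotient_span_le_span

end Module.Basis

theorem tateType_iff_finiteDimensional_general (k V : Type*) [Field k]
    [AddCommGroup V] [Module (LaurentSeries k) V] [Module (PowerSeries k) V] [Module k V]
    [IsScalarTower k (PowerSeries k) V]
    [IsScalarTower (PowerSeries k) (LaurentSeries k) V] :
    IsTateType k V ↔ FiniteDimensional (LaurentSeries k) V := by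
  constructor
  · rintro ⟨_, ⟨S, rfl⟩, htor, -⟩
    refine Module.finite_def.2 ⟨S, ?_⟩
    rw [← Submodule.span_span_of_tower (PowerSeries k)]
    exact Submodule.span_eq_top_of_exists_smul_quotient_eq_zero _ htor
  · intro
    let b := Module.finBasis (LaurentSeries k) V
    exact ⟨_, Submodule.fg_span (Set.finite_range b), b.exists_smul_eq_zero_quotient_span_range,
      b.finiteDimensional_ker_lsmul_X_quotient_span⟩

/-- A vector space over `K = k((y))` is of Tate type as a `k[[y]]`-module if and only
if it is finite-dimensional over `K`. -/
theorem tateType_iff_finiteDimensional (k V : Type*) [Field k] [IsAlgClosed k] [CharZero k]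
    [AddCommGroup V] [Module (LaurentSeries k) V] [Module (PowerSeries k) V] [Module k V]
    [IsScalarTower k (PowerSeries k) V]
    [IsScalarTower (PowerSeries k) (LaurentSeries k) V]
    [IsScalarTower k (LaurentSeries k) V] :
    IsTateType k V ↔ FiniteDimensional (LaurentSeries k) V :=
  tateType_iff_finiteDimensional_general k V
end
end
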